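/- Let Π be a finite balanced set of Poisson edges and for k : V → ℕ (with k_x at most the out-degree of x in Π) let Π_k ⊆ Π consist, for each vertex x, of the k_x outgoing Poisson edges from x with the highest times. If Π_k is balanced (∂n(Π_k) = 0), then every cycle of the proper cycle partition C(Π_k) is a cycle of C(Π), i.e., C(Π_k) ⊆ C(Π). -/

import Mathlib

open scoped Classical

namespace BKT

/-- A Poisson edge: a directed edge of a graph on `V` decorated with a time. -/
abbrev PEdge (V : Type*) := (V × V) × ℝ

variable {V : Type*}

/-- The edges of `Π` going out of `x`. -/
noncomputable def outEdges (Pi : Finset (PEdge V)) (x : V) : Finset (PEdge V) :=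
  Pi.filter (fun e => e.1.1 = x)

/-- The edges of `Π` coming into `x`. -/
noncomputable def inEdges (Pi : Finset (PEdge V)) (x : V) : Finset (PEdge V) :=
  Pi.filter (fun e => e.1.2 = x)

/-- `Π` is balanced: at every vertex the in-degree equals the out-degree. -/
def Balanced (Pi : Finset (PEdge V)) : Prop :=
  ∀ x : V, (outEdges Pi x).card = (inEdges Pi x).card

/-- All times of the Poisson edges of `Π` are distinct. -/
def DistinctTimes (Pi : Finset (PEdge V)) : Prop :=
  ∀ e ∈ Pi, ∀ e' ∈ Pi, e.2 = e'.2 → e = e'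

/-- The edge `e` touches the vertex `x`. -/
def touches (e : PEdge V) (x : V) : Prop := e.1.1 = x ∨ e.1.2 = x

/-- The set of vertices incident to some edge of `η`. -/
noncomputable def verts (η : Finset (PEdge V)) : Finset V :=
  η.image (fun e => e.1.1) ∪ η.image (fun e => e.1.2)

/-- The edge set `η` is connected: no nontrivial split into two parts that do
not share a vertex. -/
def ConnectedEdges (η : Finset (PEdge V)) : Prop :=
  ∀ s ⊆ η, s.Nonempty → s ≠ η →
    ∃ e ∈ s, ∃ e' ∈ η \ s, ∃ x : V, touches e x ∧ touches e' x

/-- `η` is a cycle: a nonempty connected set of Poisson edges in which every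
visited vertex has in-degree and out-degree exactly one. -/
def IsCycle (η : Finset (PEdge V)) : Prop :=
  η.Nonempty ∧ ConnectedEdges η ∧
    ∀ x ∈ verts η, (outEdges η x).card = 1 ∧ (inEdges η x).card = 1

/-- `P` is a partition of `Π` into cycles. -/
def IsCyclePartition (Pi : Finset (PEdge V)) (P : Finset (Finset (PEdge V))) : Prop :=
  (∀ η ∈ P, IsCycle η) ∧ (∀ η ∈ P, η ⊆ Pi) ∧
    (∀ η ∈ P, ∀ η' ∈ P, η ≠ η' → Disjoint η η') ∧
    (∀ e ∈ Pi, ∃ η ∈ P, e ∈ η)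

/-- One step of the activation-time relation: `η` and `η'` share a vertex at
which the activation time of `η` is at most that of `η'`. -/
def stepRel (η η' : Finset (PEdge V)) : Prop :=
  ∃ e ∈ η, ∃ e' ∈ η', e.1.1 = e'.1.1 ∧ e.2 ≤ e'.2

/-- The relation `⪯` on a cycle partition `P`, generated by chains of cycles
in `P` with nondecreasing activation times at shared vertices. -/
def precRel (P : Finset (Finset (PEdge V))) (η η' : Finset (PEdge V)) : Prop :=
  Relation.ReflTransGen (fun a b => a ∈ P ∧ b ∈ P ∧ stepRel a b) η η'

/-- `P` is a proper cycle partition of `Π`: a cycle partition on which `⪯`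
is a partial order (i.e., antisymmetric). -/
def IsProperCyclePartition (Pi : Finset (PEdge V)) (P : Finset (Finset (PEdge V))) : Prop :=
  IsCyclePartition Pi P ∧
    ∀ η ∈ P, ∀ η' ∈ P, precRel P η η' → precRel P η' η → η = η'


/-- `Π_k`: for each vertex `x`, the `k x` outgoing Poisson edges from `x` with
the highest times (an edge is kept iff at most `k x` outgoing edges from the
same vertex have a time at least as large). -/
noncomputable def topK (Pi : Finset (PEdge V)) (k : V → ℕ) : Finset (PEdge V) :=
  Pi.filter (fun e => ((outEdges Pi e.1.1).filter (fun f => e.2 ≤ f.2)).card ≤ k e.1.1)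

/-!
Let `η` be a `⪯`-maximal cycle of `C(Π_k)`. Every edge of `Π` that is at least as late as an edge
of `η` leaving the same vertex lies in `Π_k`, so it belongs to a cycle above `η`, i.e. to `η`
itself; hence each edge of `η` is the latest edge of `Π` at its source. Now let `ζ` be
`⪯`-maximal among the cycles of `C(Π)` meeting `η`. At a vertex of `ζ` left by an edge `c` of
`η`, the cycle of `C(Π)` through `c` lies above `ζ` and meets `η`, so it is `ζ`. Therefore in
`ζ ∩ η` every vertex with an incoming edge also has an outgoing one; counting edges shows that
`ζ ∩ η` is balanced, and a nonempty balanced subset of a cycle is the whole cycle, so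
`η = ζ ∈ C(Π)`. Removing `η` from both partitions and inducting gives the claim.
-/

section Basic

variable {Pi : Finset (PEdge V)} {x : V} {e : PEdge V}

lemma mem_outEdges : e ∈ outEdges Pi x ↔ e ∈ Pi ∧ e.1.1 = x := Finset.mem_filter

lemma mem_inEdges : e ∈ inEdges Pi x ↔ e ∈ Pi ∧ e.1.2 = x := Finset.mem_filter

lemma src_mem_verts (he : e ∈ Pi) : e.1.1 ∈ verts Pi :=
  Finset.mem_union_left _ (Finset.mem_image_of_mem _ he)

lemma tgt_mem_verts (he : e ∈ Pi) : e.1.2 ∈ verts Pi :=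
  Finset.mem_union_right _ (Finset.mem_image_of_mem _ he)

lemma outEdges_eq_empty_of_notMem_verts (hx : x ∉ verts Pi) : outEdges Pi x = ∅ :=
  Finset.filter_eq_empty_iff.mpr fun _ he hsrc => hx (hsrc ▸ src_mem_verts he)

lemma inEdges_eq_empty_of_notMem_verts (hx : x ∉ verts Pi) : inEdges Pi x = ∅ :=
  Finset.filter_eq_empty_iff.mpr fun _ he htgt => hx (htgt ▸ tgt_mem_verts he)

lemma balanced_of_card_inEdges_le (h : ∀ x, (inEdges Pi x).card ≤ (outEdges Pi x).card) :
    Balanced Pi := by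
  have hout : Pi.card = ∑ x ∈ verts Pi, (outEdges Pi x).card :=
    Finset.card_eq_sum_card_fiberwise fun _ he => src_mem_verts he
  have hin : Pi.card = ∑ x ∈ verts Pi, (inEdges Pi x).card :=
    Finset.card_eq_sum_card_fiberwise fun _ he => tgt_mem_verts he
  have heq := (Finset.sum_eq_sum_iff_of_le fun x _ => h x).mp (hin.symm.trans hout)
  intro x
  by_cases hx : x ∈ verts Pi
  · exact (heq x hx).symm
  · rw [outEdges_eq_empty_of_notMem_verts hx, inEdges_eq_empty_of_notMem_verts hx]

end Basic

namespace IsCycle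

variable {η : Finset (PEdge V)} {e e' : PEdge V}

lemma eq_of_src_eq (hη : IsCycle η) (he : e ∈ η) (he' : e' ∈ η) (h : e.1.1 = e'.1.1) :
    e = e' :=
  Finset.card_le_one.mp (hη.2.2 _ (src_mem_verts he)).1.le _ (mem_outEdges.mpr ⟨he, rfl⟩) _
    (mem_outEdges.mpr ⟨he', h.symm⟩)

lemma eq_of_tgt_eq (hη : IsCycle η) (he : e ∈ η) (he' : e' ∈ η) (h : e.1.2 = e'.1.2) :
    e = e' :=
  Finset.card_le_one.mp (hη.2.2 _ (tgt_mem_verts he)).2.le _ (mem_inEdges.mpr ⟨he, rfl⟩) _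
    (mem_inEdges.mpr ⟨he', h.symm⟩)

lemma exists_mem_src_eq (hη : IsCycle η) {x : V} (hx : x ∈ verts η) : ∃ e ∈ η, e.1.1 = x := by
  obtain ⟨e, he⟩ := Finset.card_pos.mp ((hη.2.2 x hx).1.symm ▸ Nat.one_pos)
  exact ⟨e, mem_outEdges.mp he⟩

lemma card_inEdges_le_one (hη : IsCycle η) {t : Finset (PEdge V)} (ht : t ⊆ η) (x : V) :
    (inEdges t x).card ≤ 1 :=
  Finset.card_le_one.mpr fun _ ha _ hb =>
    hη.eq_of_tgt_eq (ht (mem_inEdges.mp ha).1) (ht (mem_inEdges.mp hb).1)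
      ((mem_inEdges.mp ha).2.trans (mem_inEdges.mp hb).2.symm)

lemma eq_of_subset_of_balanced (hη : IsCycle η) {t : Finset (PEdge V)} (ht : t ⊆ η)
    (hne : t.Nonempty) (hbal : Balanced t) : t = η := by
  by_contra hne'
  obtain ⟨e, he, e', he', x, hex, he'x⟩ := hη.2.1 t ht hne hne'
  obtain ⟨he'η, he't⟩ := Finset.mem_sdiff.mp he'
  -- `e` makes `x` a vertex of `t`, and balance gives `t` both an edge out of and into `x`
  have hpos : 0 < (outEdges t x).card ∧ 0 < (inEdges t x).card := by
    rw [← hbal x, and_self]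
    rcases hex with h | h
    · exact Finset.card_pos.mpr ⟨e, mem_outEdges.mpr ⟨he, h⟩⟩
    · exact hbal x ▸ Finset.card_pos.mpr ⟨e, mem_inEdges.mpr ⟨he, h⟩⟩
  obtain ⟨a, ha⟩ := Finset.card_pos.mp hpos.1
  obtain ⟨b, hb⟩ := Finset.card_pos.mp hpos.2
  rcases he'x with h | h
  · obtain ⟨hat, hasrc⟩ := mem_outEdges.mp ha
    exact he't (hη.eq_of_src_eq he'η (ht hat) (h.trans hasrc.symm) ▸ hat)
  · obtain ⟨hbt, hbtgt⟩ := mem_inEdges.mp hb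
    exact he't (hη.eq_of_tgt_eq he'η (ht hbt) (h.trans hbtgt.symm) ▸ hbt)

lemma eq_of_forall_src_mem_verts {ζ : Finset (PEdge V)} (hζ : IsCycle ζ) (hη : IsCycle η)
    (hmeet : (ζ ∩ η).Nonempty) (h : ∀ c ∈ η, c.1.1 ∈ verts ζ → c ∈ ζ) : η = ζ := by
  have hbal : Balanced (ζ ∩ η) := by
    refine balanced_of_card_inEdges_le fun y => ?_
    rcases (inEdges (ζ ∩ η) y).eq_empty_or_nonempty with hin | ⟨e, he⟩
    · simp [hin]
    obtain ⟨hes, rfl⟩ := mem_inEdges.mp he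
    obtain ⟨heζ, heη⟩ := Finset.mem_inter.mp hes
    obtain ⟨c, hc, hcsrc⟩ := hη.exists_mem_src_eq (tgt_mem_verts heη)
    have hcζ : c ∈ ζ := h c hc (hcsrc ▸ tgt_mem_verts heζ)
    calc (inEdges (ζ ∩ η) e.1.2).card ≤ 1 := hζ.card_inEdges_le_one Finset.inter_subset_left _
      _ ≤ (outEdges (ζ ∩ η) e.1.2).card :=
        Finset.card_pos.mpr ⟨c, mem_outEdges.mpr ⟨Finset.mem_inter.mpr ⟨hcζ, hc⟩, hcsrc⟩⟩
  rw [← hη.eq_of_subset_of_balanced Finset.inter_subset_right hmeet hbal,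
    hζ.eq_of_subset_of_balanced Finset.inter_subset_left hmeet hbal]

end IsCycle

section Partition

variable {Pi : Finset (PEdge V)} {P : Finset (Finset (PEdge V))} {η η' : Finset (PEdge V)}

lemma precRel_of_mem {e e' : PEdge V} (hη : η ∈ P) (hη' : η' ∈ P) (he : e ∈ η) (he' : e' ∈ η')
    (hsrc : e.1.1 = e'.1.1) (hle : e.2 ≤ e'.2) : precRel P η η' :=
  Relation.ReflTransGen.single ⟨hη, hη', e, he, e', he', hsrc, hle⟩

lemma precRel_mono {P' : Finset (Finset (PEdge V))} (h : P' ⊆ P) (hrel : precRel P' η η') :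
    precRel P η η' :=
  Relation.ReflTransGen.mono (fun _ _ hab => ⟨h hab.1, h hab.2.1, hab.2.2⟩) _ _ hrel

lemma IsProperCyclePartition.exists_maximal (hP : IsProperCyclePartition Pi P)
    {S : Finset (Finset (PEdge V))} (hSP : S ⊆ P) (hS : S.Nonempty) :
    ∃ η ∈ S, ∀ ζ ∈ S, precRel P η ζ → ζ = η := by
  let _ : LE (Finset (PEdge V)) := ⟨precRel P⟩
  have : IsTrans (Finset (PEdge V)) (· ≤ ·) := ⟨fun _ _ _ => Relation.ReflTransGen.trans⟩
  obtain ⟨η, hη, hmax⟩ := S.exists_maximal hS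
  exact ⟨η, hη, fun ζ hζ hηζ => hP.2 ζ (hSP hζ) η (hSP hη) (hmax hζ hηζ) hηζ⟩

lemma IsCyclePartition.erase (hP : IsCyclePartition Pi P) (hη : η ∈ P) :
    IsCyclePartition (Pi \ η) (P.erase η) := by
  obtain ⟨hcyc, hsub, hdisj, hcov⟩ := hP
  refine ⟨fun ζ hζ => hcyc ζ (Finset.mem_of_mem_erase hζ), fun ζ hζ => ?_,
    fun ζ hζ ζ' hζ' => hdisj ζ (Finset.mem_of_mem_erase hζ) ζ' (Finset.mem_of_mem_erase hζ'),
    fun e he => ?_⟩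
  · obtain ⟨hζη, hζ⟩ := Finset.mem_erase.mp hζ
    exact Finset.subset_sdiff.mpr ⟨hsub ζ hζ, hdisj ζ hζ η hη hζη⟩
  · obtain ⟨hePi, heη⟩ := Finset.mem_sdiff.mp he
    obtain ⟨ζ, hζ, heζ⟩ := hcov e hePi
    exact ⟨ζ, Finset.mem_erase.mpr ⟨fun h => heη (h ▸ heζ), hζ⟩, heζ⟩

lemma IsProperCyclePartition.erase (hP : IsProperCyclePartition Pi P) (hη : η ∈ P) :
    IsProperCyclePartition (Pi \ η) (P.erase η) :=
  ⟨hP.1.erase hη, fun ζ hζ ζ' hζ' h h' =>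
    hP.2 ζ (Finset.mem_of_mem_erase hζ) ζ' (Finset.mem_of_mem_erase hζ')
      (precRel_mono (Finset.erase_subset η P) h) (precRel_mono (Finset.erase_subset η P) h')⟩

end Partition

def IsTopSegment (Pi' Pi : Finset (PEdge V)) : Prop :=
  Pi' ⊆ Pi ∧ ∀ e ∈ Pi', ∀ f ∈ Pi, f.1.1 = e.1.1 → e.2 ≤ f.2 → f ∈ Pi'

lemma topK_isTopSegment (Pi : Finset (PEdge V)) (k : V → ℕ) : IsTopSegment (topK Pi k) Pi := by
  refine ⟨Finset.filter_subset _ _, fun e he f hf hsrc hle => Finset.mem_filter.mpr ⟨hf, ?_⟩⟩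
  rw [hsrc]
  refine (Finset.card_le_card fun g hg => ?_).trans (Finset.mem_filter.mp he).2
  obtain ⟨hg, hfg⟩ := Finset.mem_filter.mp hg
  exact Finset.mem_filter.mpr ⟨hg, hle.trans hfg⟩

namespace IsTopSegment

variable {Pi' Pi η : Finset (PEdge V)} {P Q : Finset (Finset (PEdge V))}

lemma sdiff (h : IsTopSegment Pi' Pi) (η : Finset (PEdge V)) :
    IsTopSegment (Pi' \ η) (Pi \ η) :=
  ⟨Finset.sdiff_subset_sdiff h.1 le_rfl, fun e he f hf hsrc hle =>
    Finset.mem_sdiff.mpr ⟨h.2 e (Finset.mem_sdiff.mp he).1 f (Finset.mem_sdiff.mp hf).1 hsrc hle,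
      (Finset.mem_sdiff.mp hf).2⟩⟩

lemma time_le_of_maximal (hseg : IsTopSegment Pi' Pi) (hQ : IsCyclePartition Pi' Q) (hη : η ∈ Q)
    (hmax : ∀ ζ ∈ Q, precRel Q η ζ → ζ = η) {e g : PEdge V} (he : e ∈ η) (hg : g ∈ Pi)
    (hsrc : g.1.1 = e.1.1) : g.2 ≤ e.2 := by
  obtain ⟨hcyc, hsub, -, hcov⟩ := hQ
  by_contra! hlt
  obtain ⟨ζ, hζ, hgζ⟩ := hcov g (hseg.2 e (hsub η hη he) g hg hsrc hlt.le)
  obtain rfl := hmax ζ hζ (precRel_of_mem hη hζ he hgζ hsrc.symm hlt.le)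
  exact hlt.ne (congrArg Prod.snd ((hcyc ζ hη).eq_of_src_eq he hgζ hsrc.symm))

lemma mem_of_maximal (hseg : IsTopSegment Pi' Pi) (hP : IsProperCyclePartition Pi P)
    (hQ : IsCyclePartition Pi' Q) (hη : η ∈ Q) (hmax : ∀ ζ ∈ Q, precRel Q η ζ → ζ = η) :
    η ∈ P := by
  have hηcyc := hQ.1 η hη
  set S := P.filter fun ζ => (ζ ∩ η).Nonempty
  have hS : S.Nonempty := by
    obtain ⟨e, he⟩ := hηcyc.1
    obtain ⟨ζ, hζ, heζ⟩ := hP.1.2.2.2 e (hseg.1 (hQ.2.1 η hη he))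
    exact ⟨ζ, Finset.mem_filter.mpr ⟨hζ, e, Finset.mem_inter.mpr ⟨heζ, he⟩⟩⟩
  obtain ⟨ζ, hζS, hζmax⟩ := hP.exists_maximal (Finset.filter_subset _ P) hS
  obtain ⟨⟨hPcyc, hPsub, -, hPcov⟩, -⟩ := hP
  obtain ⟨hζ, hmeet⟩ := Finset.mem_filter.mp hζS
  suffices h : ∀ c ∈ η, c.1.1 ∈ verts ζ → c ∈ ζ from
    (hPcyc ζ hζ).eq_of_forall_src_mem_verts hηcyc hmeet h ▸ hζ
  intro c hc hcζ
  obtain ⟨d, hd, hdsrc⟩ := (hPcyc ζ hζ).exists_mem_src_eq hcζ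
  have hdc : d.2 ≤ c.2 := hseg.time_le_of_maximal hQ hη hmax hc (hPsub ζ hζ hd) hdsrc
  obtain ⟨ξ, hξ, hcξ⟩ := hPcov c (hseg.1 (hQ.2.1 η hη hc))
  have hξS : ξ ∈ S := Finset.mem_filter.mpr ⟨hξ, c, Finset.mem_inter.mpr ⟨hcξ, hc⟩⟩
  exact hζmax ξ hξS (precRel_of_mem hζ hξ hd hcξ hdsrc hdc) ▸ hcξ

theorem subset_of_isProperCyclePartition (hseg : IsTopSegment Pi' Pi)
    (hP : IsProperCyclePartition Pi P) (hQ : IsProperCyclePartition Pi' Q) : Q ⊆ P := by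
  induction Pi' using Finset.strongInduction generalizing Pi P Q with
  | H Pi' ih =>
  rcases Q.eq_empty_or_nonempty with rfl | hQne
  · exact Finset.empty_subset P
  obtain ⟨η, hηQ, hmax⟩ := hQ.exists_maximal subset_rfl hQne
  have hηP : η ∈ P := hseg.mem_of_maximal hP hQ.1 hηQ hmax
  have hrest : Q.erase η ⊆ P.erase η :=
    ih (Pi' \ η) (Finset.sdiff_ssubset (hQ.1.2.1 η hηQ) (hQ.1.1 η hηQ).1) (hseg.sdiff η)
      (hP.erase hηP) (hQ.erase hηQ)
  calc Q = insert η (Q.erase η) := (Finset.insert_erase hηQ).symm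
    _ ⊆ insert η (P.erase η) := Finset.insert_subset_insert η hrest
    _ = P := Finset.insert_erase hηP

end IsTopSegment

theorem topK_cycles_subset_general
    (Pi : Finset (PEdge V))
    (k : V → ℕ)
    (P Q : Finset (Finset (PEdge V)))
    (hP : IsProperCyclePartition Pi P)
    (hQ : IsProperCyclePartition (topK Pi k) Q) :
    Q ⊆ P :=
  (topK_isTopSegment Pi k).subset_of_isProperCyclePartition hP hQ

/-- If `Π_k` is balanced, then every cycle of the proper cycle partition of
`Π_k` is a cycle of the proper cycle partition of `Π`. -/
theorem topK_cycles_subset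
    (Pi : Finset (PEdge V)) (hdist : DistinctTimes Pi) (hbal : Balanced Pi)
    (k : V → ℕ) (hbalk : Balanced (topK Pi k))
    (P Q : Finset (Finset (PEdge V)))
    (hP : IsProperCyclePartition Pi P)
    (hQ : IsProperCyclePartition (topK Pi k) Q) :
    Q ⊆ P :=
  topK_cycles_subset_general Pi k P Q hP hQ

end BKT
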